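/- Let ℓ, k be null vectors with g(k,ℓ) = -1, let y be a vector orthogonal to both ℓ and k, and let Ξ be a nonzero real number. Define the endomorphism L of V* by L(ω)_β = -k^α ω_α ℓ_β - (1/2) g(y,y) ℓ^α ω_α ℓ_β - Ξ² ℓ^α ω_α k_β + Ξ (P ω)_β - Ξ ℓ^α ω_α y_β + y^α ω_α ℓ_β (in index form, L_β^α = -k^α ℓ_β - (1/2)(y·y) ℓ^α ℓ_β - Ξ² ℓ^α k_β + Ξ P^α_β - Ξ ℓ^α y_β + y^α ℓ_β). Then L is invertible, with determinant Ξ⁴. -/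

import Mathlib

/-!
With `u = (ℓ, k, y)` and suitable `v`, `L ω = Ξ ω + ∑ₘ ω(vₘ) g(uₘ)`, a rank-three perturbation of
`Ξ • id`. The Weinstein–Aronszajn identity `det (1 + U W) = det (1 + W U)` reduces `det L` to
`Ξ⁴ det (1 + Ξ⁻¹ G)` with the `3 × 3` matrix `Gₘₙ = g(uₙ, vₘ)`; the null and orthogonality relations
make `G` block triangular, and `det (1 + Ξ⁻¹ G) = 1`.
-/

open Module

theorem LinearMap.det_id_add_sum_smulRight {R E ι : Type*} [CommRing R] [AddCommGroup E]
    [Module R E] [Free R E] [Module.Finite R E] [Fintype ι] [DecidableEq ι]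
    (φ : ι → Dual R E) (e : ι → E) :
    LinearMap.det (LinearMap.id + ∑ m, (φ m).smulRight (e m)) =
      (1 + Matrix.of fun m n => φ m (e n)).det := by
  let B := Free.chooseBasis R E
  let U : Matrix _ ι R := Matrix.of fun i m => B.repr (e m) i
  let W : Matrix ι _ R := Matrix.of fun m j => φ m (B j)
  have hmatrix :
      LinearMap.toMatrix B B (LinearMap.id + ∑ m, (φ m).smulRight (e m)) = 1 + U * W := by
    ext i j
    simp [LinearMap.toMatrix_apply, Matrix.mul_apply, Matrix.one_apply, U, W, mul_comm,
      Finsupp.single_apply, eq_comm]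
  have hgram : W * U = Matrix.of fun m n => φ m (e n) := by
    ext m n
    simp only [Matrix.mul_apply, Matrix.of_apply, U, W]
    calc ∑ j, φ m (B j) * B.repr (e n) j = φ m (∑ j, B.repr (e n) j • B j) := by
          simp only [map_sum, map_smul, smul_eq_mul, mul_comm]
      _ = φ m (e n) := by rw [B.sum_repr]
  rw [← LinearMap.det_toMatrix B, hmatrix, Matrix.det_one_add_mul_comm, hgram]

theorem LinearMap.det_smul_id_add_sum_smulRight {K E ι : Type*} [Field K] [AddCommGroup E]
    [Module K E] [FiniteDimensional K E] [Fintype ι] [DecidableEq ι]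
    {c : K} (hc : c ≠ 0) (φ : ι → Dual K E) (e : ι → E) :
    LinearMap.det (c • LinearMap.id + ∑ m, (φ m).smulRight (e m)) =
      c ^ finrank K E * (1 + c⁻¹ • Matrix.of fun m n => φ m (e n)).det := by
  have hfactor : c • LinearMap.id + ∑ m, (φ m).smulRight (e m) =
      c • (LinearMap.id + ∑ m, (c⁻¹ • φ m).smulRight (e m)) := by
    ext x
    simp [smul_add, Finset.smul_sum, smul_smul, hc]
  rw [hfactor, LinearMap.det_smul, LinearMap.det_id_add_sum_smulRight]
  congr 2

theorem operatorL_invertible_det_general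
    (V : Type*) [AddCommGroup V] [Module ℝ V]
    (g : LinearMap.BilinForm ℝ V) (hsymm : g.IsSymm)
    (b : Module.Basis (Fin 4) ℝ V)
    (ℓ k y : V) (Ξ : ℝ)
    (hℓnull : g ℓ ℓ = 0) (hknull : g k k = 0) (hkℓ : g k ℓ = -1)
    (hyℓ : g y ℓ = 0) (hyk : g y k = 0)
    (hΞ : Ξ ≠ 0)
    (L : Module.Dual ℝ V →ₗ[ℝ] Module.Dual ℝ V)
    (hL : ∀ ω : Module.Dual ℝ V,
      L ω = (-(ω k)) • g ℓ + (-(1/2 * g y y * ω ℓ)) • g ℓ + (-(Ξ^2 * ω ℓ)) • g k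
        + Ξ • (ω + (ω k) • g ℓ + (ω ℓ) • g k) + (-(Ξ * ω ℓ)) • g y + (ω y) • g ℓ) :
    LinearMap.det L = Ξ^4 ∧ Function.Bijective L := by
  have hℓk : g ℓ k = -1 := by rw [← hsymm.eq]; exact hkℓ
  have hℓy : g ℓ y = 0 := by rw [← hsymm.eq]; exact hyℓ
  have hky : g k y = 0 := by rw [← hsymm.eq]; exact hyk
  have : FiniteDimensional ℝ V := b.finiteDimensional_of_finite
  let u : Fin 3 → V := ![ℓ, k, y]
  let v : Fin 3 → V := ![(Ξ - 1) • k - (g y y / 2) • ℓ + y, (Ξ - Ξ ^ 2) • ℓ, (-Ξ) • ℓ]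
  have hLuv : L = Ξ • LinearMap.id + ∑ m, (Dual.eval ℝ V (v m)).smulRight (g (u m)) := by
    ext ω x
    simp only [hL, Fin.sum_univ_three, LinearMap.add_apply, LinearMap.smul_apply,
      LinearMap.sub_apply, LinearMap.id_apply, LinearMap.smulRight_apply, Dual.eval_apply, map_add,
      map_sub, map_smul, smul_eq_mul, u, v, Matrix.cons_val_zero, Matrix.cons_val_one,
      Matrix.cons_val_two, Matrix.head_cons, Matrix.tail_cons]
    ring
  have hgram : (Matrix.of fun m n => Dual.eval ℝ V (v m) (g (u n))) =
      !![1 - Ξ, g y y / 2, g y y; 0, Ξ ^ 2 - Ξ, 0; 0, Ξ, 0] := by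
    ext m n
    fin_cases m <;> fin_cases n <;> simp [u, v, hℓnull, hknull, hkℓ, hℓk, hyℓ, hℓy, hyk, hky]
  have hdet : LinearMap.det L = Ξ ^ 4 := by
    rw [hLuv, LinearMap.det_smul_id_add_sum_smulRight hΞ, hgram, Subspace.dual_finrank_eq,
      finrank_eq_card_basis b, Matrix.det_fin_three]
    simp only [Matrix.smul_of, Matrix.smul_cons, Matrix.smul_empty, smul_eq_mul, Matrix.add_apply,
      Matrix.of_apply, Matrix.cons_val', Matrix.cons_val_fin_one, Matrix.cons_val_zero,
      Matrix.cons_val_one, Matrix.cons_val, Matrix.one_apply_eq, Matrix.one_apply_ne, ne_eq,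
      Fin.reduceEq, not_false_eq_true,
      Fintype.card_fin]
    field_simp
    ring
  refine ⟨hdet, (End.isUnit_iff L).mp ?_⟩
  rw [LinearMap.isUnit_iff_isUnit_det, hdet]
  exact (pow_ne_zero 4 hΞ).isUnit

/-- With `ℓ, k` null, `g k ℓ = -1`, `y` orthogonal to `ℓ` and `k`, and
`Ξ ≠ 0`, the endomorphism of `V*` given (in index form) by
`L_β^α = -k^α ℓ_β - (1/2)(y·y) ℓ^α ℓ_β - Ξ² ℓ^α k_β + Ξ P^α_β - Ξ ℓ^α y_β + y^α ℓ_β`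
(where `P^α_β = δ^α_β + k^α ℓ_β + ℓ^α k_β`) is invertible, with determinant `Ξ⁴`. -/
theorem operatorL_invertible_det
    (V : Type*) [AddCommGroup V] [Module ℝ V]
    (g : LinearMap.BilinForm ℝ V) (hsymm : g.IsSymm)
    (b : Module.Basis (Fin 4) ℝ V)
    (hb : ∀ i j, g (b i) (b j) = if i = j then (if i = 0 then (-1 : ℝ) else 1) else 0)
    (ℓ k y : V) (Ξ : ℝ)
    (hℓnull : g ℓ ℓ = 0) (hknull : g k k = 0) (hkℓ : g k ℓ = -1)
    (hyℓ : g y ℓ = 0) (hyk : g y k = 0)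
    (hΞ : Ξ ≠ 0)
    (L : Module.Dual ℝ V →ₗ[ℝ] Module.Dual ℝ V)
    (hL : ∀ ω : Module.Dual ℝ V,
      L ω = (-(ω k)) • g ℓ + (-(1/2 * g y y * ω ℓ)) • g ℓ + (-(Ξ^2 * ω ℓ)) • g k
        + Ξ • (ω + (ω k) • g ℓ + (ω ℓ) • g k) + (-(Ξ * ω ℓ)) • g y + (ω y) • g ℓ) :
    LinearMap.det L = Ξ^4 ∧ Function.Bijective L :=
  operatorL_invertible_det_general V g hsymm b ℓ k y Ξ hℓnull hknull hkℓ hyℓ hyk hΞ L hL
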